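/- arXiv:1608.08299 — 5 statements merged into one kernel-verified Lean document; each statement's English description precedes it below -/
import Mathlib

section
/- Let (X,μ) be a measure space with 0 < μ(X) < ∞, let p > 2, and let f : X → [0,∞) be measurable with 0 < ‖f‖_{L¹(μ)} < ∞ and ‖f‖_{L^{p/2}(μ)} < ∞. Then μ({x ∈ X : f(x) > ‖f‖_{L¹}/(4 μ(X))}) ≥ (1/2) (p/8)^{2/(p−2)} (‖f‖_{L¹}/‖f‖_{L^{p/2}})^{p/(p−2)}. -/
/-!
The set `A = {f > ‖f‖₁ / (4 μ X)}` carries at least three quarters of the mass of `f`, since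
below the threshold `f` contributes at most the threshold times `μ X`. Hölder's inequality with
exponents `p/2` and `p/(p-2)` bounds the mass on `A` by `‖f‖_{p/2} μ(A)^{(p-2)/p}`, whence
`μ A ≥ (3/4 · ‖f‖₁ / ‖f‖_{p/2})^{p/(p-2)}`. Finally `(p/8)^{2/(p-2)} / 2 ≤ (3/4)^{p/(p-2)}`
reduces to `p/6 ≤ (3/2)^{(p-2)/2}`, a consequence of `exp x ≥ 1 + x` and `log (3/2) ≥ 1/3`.
-/

open MeasureTheory

lemma add_one_div_three_le_rpow {s : ℝ} (hs : 0 ≤ s) : (s + 1) / 3 ≤ (3 / 2 : ℝ) ^ s := by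
  have hlog : 1 / 3 ≤ Real.log (3 / 2) := by
    have := Real.one_sub_inv_le_log_of_pos (x := 3 / 2) (by norm_num)
    norm_num at this ⊢; linarith
  calc (s + 1) / 3 ≤ s * Real.log (3 / 2) + 1 := by nlinarith
    _ ≤ Real.exp (Real.log (3 / 2) * s) := by rw [mul_comm]; exact Real.add_one_le_exp _
    _ = (3 / 2 : ℝ) ^ s := (Real.rpow_def_of_pos (by norm_num) s).symm

lemma half_mul_rpow_le_three_quarters_rpow {p : ℝ} (hp : 2 < p) :
    1 / 2 * (p / 8) ^ (2 / (p - 2)) ≤ (3 / 4 : ℝ) ^ (p / (p - 2)) := by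
  have hp2 : p - 2 ≠ 0 := by linarith
  have hp6 : (p / 6) ^ (2 / (p - 2)) ≤ 3 / 2 := by
    rw [← inv_div (p - 2), Real.rpow_inv_le_iff_of_pos (by positivity) (by norm_num) (by linarith)]
    convert add_one_div_three_le_rpow (s := (p - 2) / 2) (by linarith) using 1
    ring
  have hsplit : (3 / 4 : ℝ) ^ (p / (p - 2)) = 3 / 4 * (3 / 4 : ℝ) ^ (2 / (p - 2)) := by
    rw [show p / (p - 2) = 1 + 2 / (p - 2) by field_simp; ring, Real.rpow_add (by norm_num),
      Real.rpow_one]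
  rw [hsplit, show p / 8 = p / 6 * (3 / 4) by ring, Real.mul_rpow (by linarith) (by norm_num)]
  have := Real.rpow_nonneg (show (0 : ℝ) ≤ 3 / 4 by norm_num) (2 / (p - 2))
  nlinarith

section
variable {X : Type*} [MeasurableSpace X] {μ : Measure X} {f : X → ℝ}

lemma integral_sub_mul_measureReal_univ_le_setIntegral_gt [IsFiniteMeasure μ]
    (hf : Integrable f μ) {t : ℝ} (ht : 0 ≤ t) :
    ∫ x, f x ∂μ - t * μ.real Set.univ ≤ ∫ x in {x | t < f x}, f x ∂μ := by
  have hA : NullMeasurableSet {x | t < f x} μ :=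
    nullMeasurableSet_lt aemeasurable_const hf.aemeasurable
  have hbelow : ∫ x in {x | t < f x}ᶜ, f x ∂μ ≤ t * μ.real Set.univ :=
    calc ∫ x in {x | t < f x}ᶜ, f x ∂μ ≤ ∫ _ in {x | t < f x}ᶜ, t ∂μ :=
          setIntegral_mono_on₀ hf.integrableOn (integrableOn_const (measure_ne_top _ _))
            hA.compl fun x hx => not_lt.mp hx
      _ = μ.real {x | t < f x}ᶜ * t := by rw [setIntegral_const, smul_eq_mul]
      _ ≤ t * μ.real Set.univ := by
          rw [mul_comm]; exact mul_le_mul_of_nonneg_left (measureReal_mono (Set.subset_univ _)) ht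
  linarith [integral_add_compl₀ hA hf]

lemma integral_le_integral_rpow_mul_measureReal_univ [IsFiniteMeasure μ] {r : ℝ} (hr : 1 < r)
    (hf : 0 ≤ᵐ[μ] f) (hfm : AEStronglyMeasurable f μ) (hfr : Integrable (fun x => f x ^ r) μ) :
    ∫ x, f x ∂μ ≤ (∫ x, f x ^ r ∂μ) ^ (1 / r) * μ.real Set.univ ^ (1 - 1 / r) := by
  have hpq := Real.HolderConjugate.conjExponent hr
  have hfLr : MemLp f (ENNReal.ofReal r) μ := by
    refine (integrable_norm_rpow_iff hfm (ENNReal.ofReal_pos.mpr (by linarith)).ne'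
      ENNReal.ofReal_ne_top).mp ?_
    refine hfr.congr ?_
    filter_upwards [hf] with x hx
    rw [Real.norm_of_nonneg hx, ENNReal.toReal_ofReal (by linarith)]
  have := integral_mul_le_Lp_mul_Lq_of_nonneg hpq hf (ae_of_all _ fun _ => zero_le_one)
    hfLr (memLp_const 1)
  have hq : 1 / r.conjExponent = 1 - 1 / r := by
    linarith [hpq.one_div_add_one_div, div_one (1 : ℝ)]
  simpa only [mul_one, Real.one_rpow, integral_const, smul_eq_mul, hq] using this

lemma setIntegral_le_integral_rpow_mul_measureReal [IsFiniteMeasure μ] {r : ℝ} (hr : 1 < r)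
    (hf : 0 ≤ᵐ[μ] f) (hfm : AEStronglyMeasurable f μ) (hfr : Integrable (fun x => f x ^ r) μ)
    (A : Set X) :
    ∫ x in A, f x ∂μ ≤ (∫ x, f x ^ r ∂μ) ^ (1 / r) * μ.real A ^ (1 - 1 / r) := by
  have hfr0 : 0 ≤ᵐ[μ] fun x => f x ^ r := by
    filter_upwards [hf] with x hx using Real.rpow_nonneg hx r
  calc ∫ x in A, f x ∂μ
      ≤ (∫ x in A, f x ^ r ∂μ) ^ (1 / r) * (μ.restrict A).real Set.univ ^ (1 - 1 / r) :=
        integral_le_integral_rpow_mul_measureReal_univ hr (ae_restrict_of_ae hf) hfm.restrict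
          hfr.restrict
    _ ≤ (∫ x, f x ^ r ∂μ) ^ (1 / r) * μ.real A ^ (1 - 1 / r) := by
        rw [measureReal_restrict_apply_univ]
        have hr0 : 0 < 1 / r := by positivity
        exact mul_le_mul_of_nonneg_right (Real.rpow_le_rpow
          (integral_nonneg_of_ae (ae_restrict_of_ae hfr0)) (setIntegral_le_integral hfr hfr0)
          hr0.le) (by positivity)
end

theorem stmt_2_general {X : Type*} [MeasurableSpace X] (μ : Measure X)
    (hμfin : μ Set.univ < ⊤)
    (p : ℝ) (hp : 2 < p)
    (f : X → ℝ) (hfnonneg : ∀ x, 0 ≤ f x)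
    (hL1 : Integrable f μ)
    (hLp : Integrable (fun x => f x ^ (p / 2)) μ) :
    ENNReal.ofReal ((1 / 2) * (p / 8) ^ (2 / (p - 2)) *
        ((∫ x, f x ∂μ) / (∫ x, f x ^ (p / 2) ∂μ) ^ (2 / p)) ^ (p / (p - 2)))
      ≤ μ {x | (∫ x, f x ∂μ) / (4 * (μ Set.univ).toReal) < f x} := by
  have : IsFiniteMeasure μ := ⟨hμfin⟩
  rw [← measureReal_def μ Set.univ]
  set I := ∫ x, f x ∂μ
  set J := (∫ x, f x ^ (p / 2) ∂μ) ^ (2 / p)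
  set A := {x | I / (4 * μ.real Set.univ) < f x}
  have hI : 0 ≤ I := integral_nonneg hfnonneg
  have hJ : 0 ≤ J := Real.rpow_nonneg (integral_nonneg fun x => Real.rpow_nonneg (hfnonneg x) _) _
  have hmass : 3 / 4 * I ≤ ∫ x in A, f x ∂μ := by
    -- `div_self_le_one` also covers `μ X = 0`, where the threshold is the junk `I / 0 = 0`.
    have hcut : I / (4 * μ.real Set.univ) * μ.real Set.univ ≤ I / 4 := by
      rw [show I / (4 * μ.real Set.univ) * μ.real Set.univ
          = I / 4 * (μ.real Set.univ / μ.real Set.univ) by ring]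
      exact mul_le_of_le_one_right (by positivity) (div_self_le_one _)
    linarith [integral_sub_mul_measureReal_univ_le_setIntegral_gt hL1
      (t := I / (4 * μ.real Set.univ)) (by positivity)]
  have hholder : ∫ x in A, f x ∂μ ≤ J * μ.real A ^ ((p - 2) / p) := by
    convert setIntegral_le_integral_rpow_mul_measureReal (by linarith) (ae_of_all _ hfnonneg)
      hL1.aestronglyMeasurable hLp A using 3 <;> field_simp
  have hratio : 3 / 4 * (I / J) ≤ μ.real A ^ (p / (p - 2))⁻¹ := by
    rw [inv_div, mul_div_assoc']
    exact div_le_of_le_mul₀ (by positivity) (by positivity) (by linarith)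
  rw [Real.le_rpow_inv_iff_of_pos (by positivity) measureReal_nonneg (by positivity)] at hratio
  rw [ENNReal.ofReal_le_iff_le_toReal (measure_ne_top μ A)]
  calc 1 / 2 * (p / 8) ^ (2 / (p - 2)) * (I / J) ^ (p / (p - 2))
      ≤ (3 / 4) ^ (p / (p - 2)) * (I / J) ^ (p / (p - 2)) :=
        mul_le_mul_of_nonneg_right (half_mul_rpow_le_three_quarters_rpow hp) (by positivity)
    _ = (3 / 4 * (I / J)) ^ (p / (p - 2)) := (Real.mul_rpow (by norm_num) (by positivity)).symm
    _ ≤ μ.real A := hratio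

/-- Quantitative non-concentration bound via the layer-cake formula. -/
theorem stmt_2 {X : Type*} [MeasurableSpace X] (μ : Measure X)
    (hμ0 : 0 < μ Set.univ) (hμfin : μ Set.univ < ⊤)
    (p : ℝ) (hp : 2 < p)
    (f : X → ℝ) (hfmeas : Measurable f) (hfnonneg : ∀ x, 0 ≤ f x)
    (hL1 : Integrable f μ) (hL1pos : 0 < ∫ x, f x ∂μ)
    (hLp : Integrable (fun x => f x ^ (p / 2)) μ) :
    ENNReal.ofReal ((1 / 2) * (p / 8) ^ (2 / (p - 2)) *
        ((∫ x, f x ∂μ) / (∫ x, f x ^ (p / 2) ∂μ) ^ (2 / p)) ^ (p / (p - 2)))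
      ≤ μ {x | (∫ x, f x ∂μ) / (4 * (μ Set.univ).toReal) < f x} :=
  stmt_2_general μ hμfin p hp f hfnonneg hL1 hLp
end

section
/- Let K ≥ 0 be an integer, let Φ_0, Φ_1, …, Φ_K be real numbers, and let 0 < ε ≤ π. Assume the consecutive differences are non-increasing and pinched between ε and 2π − ε, i.e. ε ≤ Φ_K − Φ_{K−1} ≤ Φ_{K−1} − Φ_{K−2} ≤ … ≤ Φ_1 − Φ_0 ≤ 2π − ε. Then |∑_{k=0}^K e^{iΦ_k}| ≤ cot(ε/4). -/
open Real Finset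

/-!
With `θₖ = Φₖ₊₁ - Φₖ` and `wₖ = (1 - e^{iθₖ})⁻¹ = 1/2 + (i/2) cot(θₖ/2)` one has
`e^{iΦₖ} = (e^{iΦₖ} - e^{iΦₖ₊₁}) wₖ`, so summation by parts bounds the sum by
`|w₀| + |1 - w_{K-1}| + ∑ |wₖ₊₁ - wₖ|`. The weights lie on the line `Re w = 1/2`, the two end
terms are at most `1 / (2 sin(ε/2))`, and since the `θₖ` decrease the imaginary parts
`cot(θₖ/2)/2` increase, so the middle sum telescopes to at most `cot(ε/2)`. Finally
`cot(ε/2) + 1/sin(ε/2) = cot(ε/4)`.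
-/

namespace Real

lemma cot_antitoneOn : AntitoneOn cot (Set.Ioo 0 π) := by
  intro a ha b hb hab
  have hsub : 0 ≤ sin (b - a) :=
    sin_nonneg_of_nonneg_of_le_pi (by linarith) (by linarith [ha.1, hb.2])
  rw [sin_sub] at hsub
  rw [cot_eq_cos_div_sin, cot_eq_cos_div_sin,
    div_le_div_iff₀ (sin_pos_of_pos_of_lt_pi hb.1 hb.2) (sin_pos_of_pos_of_lt_pi ha.1 ha.2)]
  linarith

lemma one_le_cot {x : ℝ} (h0 : 0 < x) (h : x ≤ π / 4) : 1 ≤ cot x := by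
  have := cot_antitoneOn ⟨h0, by linarith [pi_pos]⟩ ⟨by positivity, by linarith [pi_pos]⟩ h
  rwa [cot_eq_cos_div_sin (π / 4), cos_pi_div_four, sin_pi_div_four,
    div_self (by positivity)] at this

lemma cot_pi_sub (x : ℝ) : cot (π - x) = -cot x := by
  rw [cot_eq_cos_div_sin, cot_eq_cos_div_sin, cos_pi_sub, sin_pi_sub, neg_div]

lemma sin_le_sin_of_le_of_le_pi_sub {a x : ℝ} (ha : -(π / 2) ≤ a) (hax : a ≤ x)
    (hx : x ≤ π - a) : sin a ≤ sin x := by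
  rcases le_or_gt x (π / 2) with h | h
  · exact sin_le_sin_of_le_of_le_pi_div_two ha h hax
  · rw [← sin_pi_sub x]
    exact sin_le_sin_of_le_of_le_pi_div_two ha (by linarith) (by linarith)

/-- No side condition is needed: where `sin x = 0` or `cos x = 0` both sides are `0`, since
`y / 0 = 0`. -/
lemma cot_two_mul_add_inv_sin_two_mul (x : ℝ) : cot (2 * x) + (sin (2 * x))⁻¹ = cot x := by
  rw [cot_eq_cos_div_sin, cot_eq_cos_div_sin, sin_two_mul, cos_two_mul]
  by_cases hs : sin x = 0
  · simp [hs]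
  by_cases hc : cos x = 0
  · simp [hc]
  field_simp
  ring

end Real

lemma norm_one_sub_inv_one_sub {𝕜 : Type*} [NormedField 𝕜] {z : 𝕜} (hz : ‖z‖ = 1)
    (hz1 : z ≠ 1) : ‖1 - (1 - z)⁻¹‖ = ‖(1 - z)⁻¹‖ := by
  have : 1 - z ≠ 0 := sub_ne_zero.2 hz1.symm
  rw [show 1 - (1 - z)⁻¹ = -z * (1 - z)⁻¹ by field_simp; ring, norm_mul, norm_neg, hz, one_mul]

namespace Complex

lemma norm_inv_one_sub_exp_I_mul (θ : ℝ) :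
    ‖(1 - exp (I * θ))⁻¹‖ = |2 * Real.sin (θ / 2)|⁻¹ := by
  rw [norm_inv, norm_sub_rev, norm_exp_I_mul_ofReal_sub_one, Real.norm_eq_abs]

lemma exp_I_mul_ne_one {θ : ℝ} (h : Real.sin (θ / 2) ≠ 0) : exp (I * θ) ≠ 1 := by
  rw [← sub_ne_zero, ← norm_ne_zero_iff, norm_exp_I_mul_ofReal_sub_one]
  simpa using h

lemma inv_one_sub_exp_I_mul {θ : ℝ} (h : Real.sin (θ / 2) ≠ 0) :
    (1 - exp (I * θ))⁻¹ = 1 / 2 + (Real.cot (θ / 2) / 2 : ℝ) * I := by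
  apply inv_eq_of_mul_eq_one_right
  have hθ : (θ : ℂ) = ((2 * (θ / 2) : ℝ) : ℂ) := by push_cast; ring
  rw [hθ, mul_comm I, exp_mul_I, ← ofReal_cos, ← ofReal_sin, Real.cos_two_mul, Real.sin_two_mul,
    Real.cot_eq_cos_div_sin]
  have hpy := Real.sin_sq_add_cos_sq (θ / 2)
  generalize Real.sin (θ / 2) = s, Real.cos (θ / 2) = c at h hpy ⊢
  apply Complex.ext <;> simp [pow_two] <;> field_simp
  · ring
  · linear_combination (-2 * c) * hpy

lemma norm_inv_one_sub_exp_I_mul_sub {θ θ' : ℝ} (h : Real.sin (θ / 2) ≠ 0)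
    (h' : Real.sin (θ' / 2) ≠ 0) :
    ‖(1 - exp (I * θ'))⁻¹ - (1 - exp (I * θ))⁻¹‖ = |Real.cot (θ' / 2) - Real.cot (θ / 2)| / 2 := by
  rw [inv_one_sub_exp_I_mul h, inv_one_sub_exp_I_mul h', add_sub_add_left_eq_sub, ← sub_mul,
    ← ofReal_sub, norm_mul, norm_I, mul_one, norm_real, Real.norm_eq_abs, ← sub_div, abs_div,
    abs_two]

lemma exp_I_mul_eq_sub_mul_inv {x y : ℝ} (h : exp (I * (y - x : ℝ)) ≠ 1) :
    exp (I * x) = (exp (I * x) - exp (I * y)) * (1 - exp (I * (y - x : ℝ)))⁻¹ := by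
  have hy : exp (I * y) = exp (I * x) * exp (I * (y - x : ℝ)) := by
    rw [← exp_add]; push_cast; ring_nf
  rw [hy, ← mul_one_sub, mul_assoc, mul_inv_cancel₀ (sub_ne_zero.2 h.symm), mul_one]

end Complex

lemma sum_range_sub_mul_add_eq {R : Type*} [CommRing R] (u w : ℕ → R) (n : ℕ) :
    ∑ k ∈ range (n + 1), (u k - u (k + 1)) * w k + u (n + 1) =
      u 0 * w 0 + ∑ k ∈ range n, u (k + 1) * (w (k + 1) - w k) + u (n + 1) * (1 - w n) := by
  induction n with
  | zero => simp only [zero_add, range_one, sum_singleton, range_zero, sum_empty]; ring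
  | succ n ih =>
    rw [sum_range_succ (fun k ↦ (u k - u (k + 1)) * w k) (n + 1),
      sum_range_succ (fun k ↦ u (k + 1) * (w (k + 1) - w k)) n]
    linear_combination ih

lemma norm_sum_range_le_of_eq_sub_mul {R : Type*} [NormedCommRing R] {u w : ℕ → R} {n : ℕ}
    (hu : ∀ k, ‖u k‖ ≤ 1) (huw : ∀ k ≤ n, u k = (u k - u (k + 1)) * w k) :
    ‖∑ k ∈ range (n + 2), u k‖ ≤
      ‖w 0‖ + ∑ k ∈ range n, ‖w (k + 1) - w k‖ + ‖1 - w n‖ := by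
  have hsum : ∑ k ∈ range (n + 2), u k =
      ∑ k ∈ range (n + 1), (u k - u (k + 1)) * w k + u (n + 1) := by
    rw [sum_range_succ]
    exact congrArg (· + _) (sum_congr rfl fun k hk ↦ huw k (Nat.lt_succ_iff.1 (mem_range.1 hk)))
  have hmul (k : ℕ) (a : R) : ‖u k * a‖ ≤ ‖a‖ :=
    (norm_mul_le _ _).trans (mul_le_of_le_one_left (norm_nonneg _) (hu k))
  rw [hsum, sum_range_sub_mul_add_eq]
  refine (norm_add₃_le).trans (add_le_add_three (hmul 0 _) ?_ (hmul _ _))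
  exact (norm_sum_le _ _).trans (sum_le_sum fun k _ ↦ hmul _ _)

section KuzminLandau

open Complex (I)

lemma norm_inv_one_sub_exp_I_mul_le {x a : ℝ} (ha : 0 < a) (hx : a ≤ x / 2 ∧ x / 2 ≤ π - a) :
    ‖(1 - Complex.exp (I * x))⁻¹‖ ≤ (2 * sin a)⁻¹ := by
  have hsin_pos : 0 < sin a := sin_pos_of_pos_of_lt_pi ha (by linarith)
  have hsin : sin a ≤ sin (x / 2) := sin_le_sin_of_le_of_le_pi_sub (by linarith) hx.1 hx.2
  rw [Complex.norm_inv_one_sub_exp_I_mul, abs_of_pos (by linarith)]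
  gcongr

lemma sum_range_norm_inv_one_sub_exp_I_mul_sub_le {θ : ℕ → ℝ} {n : ℕ} {a : ℝ} (ha : 0 < a)
    (hanti : AntitoneOn θ (Set.Iic n)) (hθ : ∀ k ≤ n, a ≤ θ k / 2 ∧ θ k / 2 ≤ π - a) :
    ∑ k ∈ range n,
      ‖(1 - Complex.exp (I * θ (k + 1)))⁻¹ - (1 - Complex.exp (I * θ k))⁻¹‖ ≤ cot a := by
  have hmem (k : ℕ) (hk : k ≤ n) : θ k / 2 ∈ Set.Ioo 0 π :=
    ⟨by linarith [hθ k hk], by linarith [hθ k hk]⟩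
  have hsin_ne (k : ℕ) (hk : k ≤ n) : sin (θ k / 2) ≠ 0 :=
    (sin_pos_of_pos_of_lt_pi (hmem k hk).1 (hmem k hk).2).ne'
  have hterm (k : ℕ) (hk : k ∈ range n) :
      ‖(1 - Complex.exp (I * θ (k + 1)))⁻¹ - (1 - Complex.exp (I * θ k))⁻¹‖ =
        cot (θ (k + 1) / 2) / 2 - cot (θ k / 2) / 2 := by
    have hk : k + 1 ≤ n := mem_range.1 hk
    have hcot : cot (θ k / 2) ≤ cot (θ (k + 1) / 2) :=
      cot_antitoneOn (hmem _ hk) (hmem k (by omega)) <| by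
        linarith [hanti (Set.mem_Iic.2 (by omega : k ≤ n)) (Set.mem_Iic.2 hk) k.le_succ]
    rw [Complex.norm_inv_one_sub_exp_I_mul_sub (hsin_ne k (by omega)) (hsin_ne _ hk),
      abs_of_nonneg (sub_nonneg.2 hcot), sub_div]
  have hlast : cot (θ n / 2) ≤ cot a :=
    cot_antitoneOn ⟨ha, by linarith [hθ n le_rfl]⟩ (hmem n le_rfl) (hθ n le_rfl).1
  have hfirst : cot (π - a) ≤ cot (θ 0 / 2) :=
    cot_antitoneOn (hmem 0 n.zero_le) ⟨by linarith [hθ 0 n.zero_le], by linarith⟩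
      (hθ 0 n.zero_le).2
  rw [sum_congr rfl hterm, sum_range_sub (fun k ↦ cot (θ k / 2) / 2)]
  rw [cot_pi_sub] at hfirst
  linarith

theorem norm_sum_exp_le_cot_of_antitoneOn (n : ℕ) (φ : ℕ → ℝ) {ε : ℝ} (hε : 0 < ε)
    (hanti : AntitoneOn (fun k ↦ φ (k + 1) - φ k) (Set.Iic n))
    (hlb : ε ≤ φ (n + 1) - φ n) (hub : φ 1 - φ 0 ≤ 2 * π - ε) :
    ‖∑ k ∈ range (n + 2), Complex.exp (I * φ k)‖ ≤ cot (ε / 4) := by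
  set θ : ℕ → ℝ := fun k ↦ φ (k + 1) - φ k
  set w : ℕ → ℂ := fun k ↦ (1 - Complex.exp (I * θ k))⁻¹
  have hθ (k : ℕ) (hk : k ≤ n) : ε / 2 ≤ θ k / 2 ∧ θ k / 2 ≤ π - ε / 2 := by
    have h₁ : θ n ≤ θ k := hanti (Set.mem_Iic.2 hk) Set.self_mem_Iic hk
    have h₂ : θ k ≤ φ 1 - φ 0 := hanti (Set.mem_Iic.2 n.zero_le) (Set.mem_Iic.2 hk) k.zero_le
    constructor <;> linarith
  have hexp_ne (k : ℕ) (hk : k ≤ n) : Complex.exp (I * θ k) ≠ 1 :=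
    Complex.exp_I_mul_ne_one (sin_pos_of_pos_of_lt_pi (by linarith [hθ k hk])
      (by linarith [hθ k hk])).ne'
  calc ‖∑ k ∈ range (n + 2), Complex.exp (I * φ k)‖
      ≤ ‖w 0‖ + ∑ k ∈ range n, ‖w (k + 1) - w k‖ + ‖1 - w n‖ :=
        norm_sum_range_le_of_eq_sub_mul (fun k ↦ by simp)
          fun k hk ↦ Complex.exp_I_mul_eq_sub_mul_inv (hexp_ne k hk)
    _ ≤ (2 * sin (ε / 2))⁻¹ + cot (ε / 2) + (2 * sin (ε / 2))⁻¹ := by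
        rw [norm_one_sub_inv_one_sub (by simp) (hexp_ne n le_rfl)]
        gcongr
        · exact norm_inv_one_sub_exp_I_mul_le (by linarith) (hθ 0 n.zero_le)
        · exact sum_range_norm_inv_one_sub_exp_I_mul_sub_le (by linarith) hanti hθ
        · exact norm_inv_one_sub_exp_I_mul_le (by linarith) (hθ n le_rfl)
    _ = cot (2 * (ε / 4)) + (sin (2 * (ε / 4)))⁻¹ := by ring_nf
    _ = cot (ε / 4) := cot_two_mul_add_inv_sin_two_mul _

end KuzminLandau

/-- The Kuzmin–Landau inequality for exponential sums. -/
theorem stmt_3 (K : ℕ) (Φ : ℕ → ℝ) (ε : ℝ) (hε : 0 < ε) (hεπ : ε ≤ π)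
    (hlb : 1 ≤ K → ε ≤ Φ K - Φ (K - 1))
    (hmono : ∀ k : ℕ, 1 ≤ k → k + 1 ≤ K → Φ (k + 1) - Φ k ≤ Φ k - Φ (k - 1))
    (hub : 1 ≤ K → Φ 1 - Φ 0 ≤ 2 * π - ε) :
    ‖∑ k ∈ Finset.range (K + 1), Complex.exp (Complex.I * (Φ k : ℂ))‖ ≤ Real.cot (ε / 4) := by
  obtain _ | n := K
  · simpa using one_le_cot (by linarith) (by linarith)
  have hanti : AntitoneOn (fun k ↦ Φ (k + 1) - Φ k) (Set.Iic n) :=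
    antitoneOn_of_add_one_le Set.ordConnected_Iic fun a _ _ ha ↦ by
      simpa using hmono (a + 1) (by omega) (by simpa using ha)
  exact norm_sum_exp_le_cot_of_antitoneOn n Φ hε hanti (by simpa using hlb (by omega))
    (hub (by omega))
end

section
/- Let (r_ℓ)_{ℓ≥1} be a sequence of positive real numbers with r_ℓ → ∞ and r_ℓ/ℓ → 0 as ℓ → ∞, let η₁ > 2 and 0 < η₂ < √2. Then: (1) there are constants c₁, c₂ > 0 and L ≥ 1 such that for all ℓ ≥ L, all integers m with ℓ − 2r_ℓ ≤ m ≤ ℓ − r_ℓ, and all θ with |θ| < η₂ (r_ℓ/ℓ)^{1/2}, one has −c₁ ℓ r_ℓ ≤ Q_{ℓ,m}(θ) ≤ −c₂ ℓ r_ℓ; (2) there are constants c₁', c₂' > 0 and L' ≥ 1 such that for all ℓ ≥ L', all integers m with r_ℓ ≤ m ≤ 2r_ℓ, and all θ with |θ| < π/2 − η₁ r_ℓ/ℓ, one has −c₁' ℓ² ≤ Q_{ℓ,m}(θ) ≤ −c₂' ℓ². -/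
/-! For `m ≠ 0` and `cos θ ≠ 0`, `Q ≥ m² - ℓ² - ℓ - 1/2`, which gives both lower bounds. For the
upper bounds, `Q ≤ m² / cos² θ - ℓ²`. Near the equator, `cos² θ ≥ 1 - θ² ≥ 1 - η₂² r/ℓ` and
`m ≤ ℓ - r`, so `m² / cos² θ ≤ ℓ² - (1 - η₂²/2) ℓ r` once `r/ℓ` is small. Away from the poles,
`cos θ ≥ sin (η₁ r/ℓ) ≈ η₁ r/ℓ` and `m ≤ 2r`, so `m² / cos² θ ≲ (2/η₁)² ℓ²` with `2/η₁ < 1`. -/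

open Real Filter

noncomputable def Qlm (ℓ : ℕ) (m : ℤ) (θ : ℝ) : ℝ :=
  ((m : ℝ) ^ 2 - 1 / 4) / Real.cos θ ^ 2 - 1 / 4 - (ℓ : ℝ) * ((ℓ : ℝ) + 1)

lemma one_sub_sq_le_cos_sq (θ : ℝ) : 1 - θ ^ 2 ≤ cos θ ^ 2 := by
  rw [cos_sq']
  linarith [sin_sq_le_sq (x := θ)]

lemma mul_le_sin_of_sq_le {x b : ℝ} (hx : 0 ≤ x) (hxb : x ^ 2 ≤ 6 * (1 - b)) : b * x ≤ sin x := by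
  refine le_trans ?_ (sin_ge_sub_cube hx)
  nlinarith

lemma sin_le_cos_of_abs_le {x θ : ℝ} (hx : 0 ≤ x) (hθ : |θ| ≤ π / 2 - x) : sin x ≤ cos θ := by
  rw [← cos_abs, ← cos_pi_div_two_sub]
  exact cos_le_cos_of_nonneg_of_le_pi (abs_nonneg θ) (by linarith [pi_pos]) hθ

lemma sq_sub_le_Qlm {ℓ : ℕ} {m : ℤ} {θ : ℝ} (hm : m ≠ 0) (hθ : cos θ ≠ 0) :
    (m : ℝ) ^ 2 - 1 / 2 - ℓ * (ℓ + 1) ≤ Qlm ℓ m θ := by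
  have hm1 : (1 : ℝ) ≤ (m : ℝ) ^ 2 := by
    exact_mod_cast one_le_sq_iff_one_le_abs m |>.2 (Int.one_le_abs hm)
  have hC : m ^ 2 - 1 / 4 ≤ ((m : ℝ) ^ 2 - 1 / 4) / cos θ ^ 2 :=
    (le_div_iff₀ (by positivity)).2 (mul_le_of_le_one_right (by linarith) (cos_sq_le_one θ))
  unfold Qlm
  linarith

lemma Qlm_le_of_sq_le_mul_cos_sq {ℓ : ℕ} {m : ℤ} {θ K : ℝ} (hK : 0 ≤ K)
    (h : (m : ℝ) ^ 2 ≤ K * cos θ ^ 2) : Qlm ℓ m θ ≤ K - ℓ ^ 2 := by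
  have hC : ((m : ℝ) ^ 2 - 1 / 4) / cos θ ^ 2 ≤ K :=
    (div_le_div_of_nonneg_right (by linarith) (sq_nonneg _)).trans
      (div_le_of_le_mul₀ (sq_nonneg _) hK h)
  unfold Qlm
  nlinarith [(Nat.cast_nonneg ℓ : (0 : ℝ) ≤ ℓ)]

lemma Qlm_bounds_of_near_diagonal {ℓ : ℕ} {m : ℤ} {θ r η : ℝ} (hℓ : 1 ≤ ℓ) (hr : 2 ≤ r)
    (hs₁ : r / ℓ ≤ (2 - η ^ 2) / 2) (hs₂ : r / ℓ ≤ 1 / 4)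
    (hm₁ : ℓ - 2 * r ≤ m) (hm₂ : m ≤ ℓ - r) (hθ : |θ| ≤ η * √(r / ℓ)) :
    -5 * ℓ * r ≤ Qlm ℓ m θ ∧ Qlm ℓ m θ ≤ -((2 - η ^ 2) / 2) * ℓ * r := by
  have hℓ1 : (1 : ℝ) ≤ ℓ := by exact_mod_cast hℓ
  obtain ⟨s, rfl⟩ : ∃ s, r = s * ℓ := ⟨r / ℓ, by field_simp⟩
  rw [mul_div_cancel_right₀ _ (by positivity)] at hs₁ hs₂ hθ
  have hs : 0 ≤ s := by nlinarith
  have hθs : θ ^ 2 ≤ η ^ 2 * s := by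
    calc θ ^ 2 = |θ| ^ 2 := (sq_abs θ).symm
      _ ≤ (η * √s) ^ 2 := pow_le_pow_left₀ (abs_nonneg θ) hθ 2
      _ = η ^ 2 * s := by rw [mul_pow, sq_sqrt hs]
  have hC : 1 - η ^ 2 * s ≤ cos θ ^ 2 := (one_sub_sq_le_cos_sq θ).trans' (by linarith)
  -- `η² s ≤ η² (2 - η²) / 2 ≤ 1 / 2`
  have hC0 : 0 < cos θ ^ 2 := by nlinarith [sq_nonneg (η ^ 2 - 1), sq_nonneg η]
  have hm0 : (0 : ℝ) < m := by nlinarith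
  constructor
  · calc -5 * ℓ * (s * ℓ) ≤ (m : ℝ) ^ 2 - 1 / 2 - ℓ * (ℓ + 1) := by nlinarith
      _ ≤ Qlm ℓ m θ := sq_sub_le_Qlm (by exact_mod_cast hm0.ne') fun h => by simp [h] at hC0
  · -- with `c = (2 - η²) / 2`, the difference is `s (c - s) + η² c s²`
    have hcs : (1 - s) ^ 2 ≤ (1 - (2 - η ^ 2) / 2 * s) * (1 - η ^ 2 * s) := by
      nlinarith [mul_nonneg hs (sub_nonneg.2 hs₁),
        mul_nonneg (mul_nonneg (sq_nonneg η) (hs.trans hs₁)) (mul_nonneg hs hs)]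
    have hm : (m : ℝ) ^ 2 ≤ ℓ ^ 2 * (1 - (2 - η ^ 2) / 2 * s) * cos θ ^ 2 := by
      calc (m : ℝ) ^ 2 ≤ (ℓ * (1 - s)) ^ 2 := pow_le_pow_left₀ hm0.le (by linarith) 2
        _ ≤ ℓ ^ 2 * ((1 - (2 - η ^ 2) / 2 * s) * (1 - η ^ 2 * s)) := by
          rw [mul_pow]; exact mul_le_mul_of_nonneg_left hcs (sq_nonneg _)
        _ ≤ ℓ ^ 2 * ((1 - (2 - η ^ 2) / 2 * s) * cos θ ^ 2) := by gcongr; nlinarith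
        _ = _ := by ring
    calc Qlm ℓ m θ ≤ ℓ ^ 2 * (1 - (2 - η ^ 2) / 2 * s) - ℓ ^ 2 :=
          Qlm_le_of_sq_le_mul_cos_sq (by nlinarith) hm
      _ = -((2 - η ^ 2) / 2) * ℓ * (s * ℓ) := by ring

lemma Qlm_bounds_of_small_order {ℓ : ℕ} {m : ℤ} {θ r η b : ℝ} (hℓ : 1 ≤ ℓ) (hr : 0 < r)
    (hη : 0 < η) (hb : 0 < b) (hx : (η * r / ℓ) ^ 2 ≤ 6 * (1 - b))
    (hm₁ : r ≤ m) (hm₂ : m ≤ 2 * r) (hθ : |θ| ≤ π / 2 - η * r / ℓ) :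
    -3 * (ℓ : ℝ) ^ 2 ≤ Qlm ℓ m θ ∧ Qlm ℓ m θ ≤ -(1 - (2 / (b * η)) ^ 2) * (ℓ : ℝ) ^ 2 := by
  have hℓ1 : (1 : ℝ) ≤ ℓ := by exact_mod_cast hℓ
  have hx0 : 0 ≤ η * r / ℓ := by positivity
  have hcos : b * (η * r / ℓ) ≤ cos θ :=
    (mul_le_sin_of_sq_le hx0 hx).trans (sin_le_cos_of_abs_le hx0 hθ)
  have hcos0 : 0 < cos θ := hcos.trans_lt' (by positivity)
  constructor
  · calc -3 * (ℓ : ℝ) ^ 2 ≤ (m : ℝ) ^ 2 - 1 / 2 - ℓ * (ℓ + 1) := by nlinarith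
      _ ≤ Qlm ℓ m θ := sq_sub_le_Qlm (by rintro rfl; simp at hm₁; linarith) hcos0.ne'
  · have hm : (m : ℝ) ≤ 2 / (b * η) * ℓ * cos θ := by
      calc (m : ℝ) ≤ 2 / (b * η) * ℓ * (b * (η * r / ℓ)) := by
            refine hm₂.trans_eq ?_
            field_simp
        _ ≤ 2 / (b * η) * ℓ * cos θ := by gcongr
    calc Qlm ℓ m θ ≤ (2 / (b * η) * ℓ) ^ 2 - ℓ ^ 2 :=
          Qlm_le_of_sq_le_mul_cos_sq (sq_nonneg _) (by rw [← mul_pow]; gcongr; linarith)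
      _ = -(1 - (2 / (b * η)) ^ 2) * (ℓ : ℝ) ^ 2 := by ring

lemma exists_Qlm_bounds_near_diagonal (r : ℕ → ℝ) (hrinf : Tendsto r atTop atTop)
    (hr0 : Tendsto (fun ℓ : ℕ => r ℓ / (ℓ : ℝ)) atTop (nhds 0))
    {η : ℝ} (hη0 : 0 < η) (hη : η < √2) :
    ∃ c₁ > (0:ℝ), ∃ c₂ > (0:ℝ), ∃ L : ℕ, 1 ≤ L ∧
      ∀ ℓ : ℕ, L ≤ ℓ → ∀ m : ℤ, (ℓ : ℝ) - 2 * r ℓ ≤ m → (m : ℝ) ≤ ℓ - r ℓ →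
        ∀ θ : ℝ, |θ| < η * √(r ℓ / ℓ) →
          -c₁ * ℓ * r ℓ ≤ Qlm ℓ m θ ∧ Qlm ℓ m θ ≤ -c₂ * ℓ * r ℓ := by
  have hηsq : η ^ 2 < 2 := by simpa using pow_lt_pow_left₀ hη hη0.le two_ne_zero
  obtain ⟨L, hL1, hL⟩ := (atTop_basis' 1).eventually_iff.1 <|
    (hrinf.eventually_ge_atTop 2).and <|
      (hr0.eventually_le_const (by linarith : (0 : ℝ) < (2 - η ^ 2) / 2)).and <|
        hr0.eventually_le_const (by norm_num : (0 : ℝ) < 1 / 4)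
  refine ⟨5, by norm_num, (2 - η ^ 2) / 2, by linarith, L, hL1, fun ℓ hℓ m hm₁ hm₂ θ hθ => ?_⟩
  obtain ⟨hr, hs₁, hs₂⟩ := hL hℓ
  exact Qlm_bounds_of_near_diagonal (hL1.trans hℓ) hr hs₁ hs₂ hm₁ hm₂ hθ.le

lemma exists_Qlm_bounds_small_order (r : ℕ → ℝ) (hrinf : Tendsto r atTop atTop)
    (hr0 : Tendsto (fun ℓ : ℕ => r ℓ / (ℓ : ℝ)) atTop (nhds 0)) {η : ℝ} (hη : 2 < η) :
    ∃ c₁ > (0:ℝ), ∃ c₂ > (0:ℝ), ∃ L : ℕ, 1 ≤ L ∧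
      ∀ ℓ : ℕ, L ≤ ℓ → ∀ m : ℤ, r ℓ ≤ m → (m : ℝ) ≤ 2 * r ℓ →
        ∀ θ : ℝ, |θ| < π / 2 - η * r ℓ / ℓ →
          -c₁ * (ℓ : ℝ) ^ 2 ≤ Qlm ℓ m θ ∧ Qlm ℓ m θ ≤ -c₂ * (ℓ : ℝ) ^ 2 := by
  have hη0 : 0 < η := by linarith
  set b := (η + 2) / (2 * η) with hb
  have hb1 : b < 1 := by rw [hb, div_lt_one (by positivity)]; linarith
  have hbη : 2 / (b * η) < 1 := by
    rw [hb, div_lt_one (by positivity)]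
    field_simp
    linarith
  have hx : Tendsto (fun ℓ : ℕ => (η * r ℓ / ℓ) ^ 2) atTop (nhds 0) := by
    simpa [mul_div_assoc] using (hr0.const_mul η).pow 2
  obtain ⟨L, hL1, hL⟩ := (atTop_basis' 1).eventually_iff.1 <|
    (hrinf.eventually_ge_atTop 1).and <|
      hx.eventually_le_const (by linarith : (0 : ℝ) < 6 * (1 - b))
  refine ⟨3, by norm_num, 1 - (2 / (b * η)) ^ 2,
    sub_pos.2 (pow_lt_one₀ (by positivity) hbη two_ne_zero), L, hL1,
    fun ℓ hℓ m hm₁ hm₂ θ hθ => ?_⟩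
  obtain ⟨hr, hx⟩ := hL hℓ
  exact Qlm_bounds_of_small_order (hL1.trans hℓ) (by linarith) hη0 (by positivity) hx hm₁ hm₂ hθ.le

theorem stmt_4_general (r : ℕ → ℝ)
    (hrinf : Tendsto r atTop atTop)
    (hr0 : Tendsto (fun ℓ : ℕ => r ℓ / (ℓ : ℝ)) atTop (nhds 0))
    (η₁ η₂ : ℝ) (hη₁ : 2 < η₁) (hη₂0 : 0 < η₂) (hη₂ : η₂ < Real.sqrt 2) :
    (∃ c₁ > (0:ℝ), ∃ c₂ > (0:ℝ), ∃ L : ℕ, 1 ≤ L ∧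
      ∀ ℓ : ℕ, L ≤ ℓ → ∀ m : ℤ,
        (ℓ : ℝ) - 2 * r ℓ ≤ (m : ℝ) → (m : ℝ) ≤ (ℓ : ℝ) - r ℓ →
        ∀ θ : ℝ, |θ| < η₂ * Real.sqrt (r ℓ / (ℓ : ℝ)) →
          -c₁ * ℓ * r ℓ ≤ Qlm ℓ m θ ∧ Qlm ℓ m θ ≤ -c₂ * ℓ * r ℓ) ∧
    (∃ c₁ > (0:ℝ), ∃ c₂ > (0:ℝ), ∃ L : ℕ, 1 ≤ L ∧
      ∀ ℓ : ℕ, L ≤ ℓ → ∀ m : ℤ,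
        r ℓ ≤ (m : ℝ) → (m : ℝ) ≤ 2 * r ℓ →
        ∀ θ : ℝ, |θ| < π / 2 - η₁ * r ℓ / (ℓ : ℝ) →
          -c₁ * (ℓ : ℝ) ^ 2 ≤ Qlm ℓ m θ ∧ Qlm ℓ m θ ≤ -c₂ * (ℓ : ℝ) ^ 2) :=
  ⟨exists_Qlm_bounds_near_diagonal r hrinf hr0 hη₂0 hη₂,
    exists_Qlm_bounds_small_order r hrinf hr0 hη₁⟩

theorem stmt_4 (r : ℕ → ℝ) (hrpos : ∀ ℓ, 0 < r ℓ)
    (hrinf : Tendsto r atTop atTop)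
    (hr0 : Tendsto (fun ℓ : ℕ => r ℓ / (ℓ : ℝ)) atTop (nhds 0))
    (η₁ η₂ : ℝ) (hη₁ : 2 < η₁) (hη₂0 : 0 < η₂) (hη₂ : η₂ < Real.sqrt 2) :
    (∃ c₁ > (0:ℝ), ∃ c₂ > (0:ℝ), ∃ L : ℕ, 1 ≤ L ∧
      ∀ ℓ : ℕ, L ≤ ℓ → ∀ m : ℤ,
        (ℓ : ℝ) - 2 * r ℓ ≤ (m : ℝ) → (m : ℝ) ≤ (ℓ : ℝ) - r ℓ →
        ∀ θ : ℝ, |θ| < η₂ * Real.sqrt (r ℓ / (ℓ : ℝ)) →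
          -c₁ * ℓ * r ℓ ≤ Qlm ℓ m θ ∧ Qlm ℓ m θ ≤ -c₂ * ℓ * r ℓ) ∧
    (∃ c₁ > (0:ℝ), ∃ c₂ > (0:ℝ), ∃ L : ℕ, 1 ≤ L ∧
      ∀ ℓ : ℕ, L ≤ ℓ → ∀ m : ℤ,
        r ℓ ≤ (m : ℝ) → (m : ℝ) ≤ 2 * r ℓ →
        ∀ θ : ℝ, |θ| < π / 2 - η₁ * r ℓ / (ℓ : ℝ) →
          -c₁ * (ℓ : ℝ) ^ 2 ≤ Qlm ℓ m θ ∧ Qlm ℓ m θ ≤ -c₂ * (ℓ : ℝ) ^ 2) :=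
  stmt_4_general r hrinf hr0 η₁ η₂ hη₁ hη₂0 hη₂
end

section
/- Let ℓ ≥ 1 and m ≥ 1 be integers and let θ ∈ (−π/2, π/2) be such that Q_{ℓ,m+1}(θ) ≤ 0. Then √|Q_{ℓ,m+1}(θ)| + √|Q_{ℓ,m−1}(θ)| ≤ 2 √|Q_{ℓ,m}(θ)|. -/
open Real

lemma sqrt_add_sqrt_le (a b q : ℝ) (ha : 0 ≤ a) (hb : 0 ≤ b) (hab : a + b ≤ 2 * q) :
    Real.sqrt a + Real.sqrt b ≤ 2 * Real.sqrt q := by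
  have hq : 0 ≤ q := by linarith
  have h1 : (Real.sqrt a + Real.sqrt b) ^ 2 ≤ (2 * Real.sqrt q) ^ 2 := by
    have := Real.sq_sqrt ha
    have := Real.sq_sqrt hb
    have := Real.sq_sqrt hq
    nlinarith [sq_nonneg (Real.sqrt a - Real.sqrt b), Real.sqrt_nonneg a,
      Real.sqrt_nonneg b, Real.sqrt_nonneg q]
  have h2 := Real.sqrt_le_sqrt h1
  rwa [Real.sqrt_sq (by positivity), Real.sqrt_sq (by positivity)] at h2

theorem stmt_6 (ℓ : ℕ) (hℓ : 1 ≤ ℓ) (m : ℤ) (hm : 1 ≤ m) (θ : ℝ)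
    (hθ : θ ∈ Set.Ioo (-(π / 2)) (π / 2)) (hQ : Qlm ℓ (m + 1) θ ≤ 0) :
    Real.sqrt |Qlm ℓ (m + 1) θ| + Real.sqrt |Qlm ℓ (m - 1) θ| ≤
      2 * Real.sqrt |Qlm ℓ m θ| := by
  obtain ⟨h1, h2⟩ := hθ
  have hc : 0 < Real.cos θ := Real.cos_pos_of_mem_Ioo ⟨by linarith, h2⟩
  have hc2 : 0 < Real.cos θ ^ 2 := by positivity
  have hm' : (1 : ℝ) ≤ (m : ℝ) := by exact_mod_cast hm
  have mono : ∀ x y : ℤ, 0 ≤ x → x ≤ y → Qlm ℓ x θ ≤ Qlm ℓ y θ := by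
    intro x y hx hxy
    unfold Qlm
    have hx' : (0 : ℝ) ≤ (x : ℝ) := by exact_mod_cast hx
    have hxy' : (x : ℝ) ≤ (y : ℝ) := by exact_mod_cast hxy
    have : ((x : ℝ) ^ 2 - 1/4) / Real.cos θ ^ 2 ≤ ((y : ℝ) ^ 2 - 1/4) / Real.cos θ ^ 2 := by
      gcongr
    linarith
  have hQm : Qlm ℓ m θ ≤ 0 := le_trans (mono m (m+1) (by linarith) (by linarith)) hQ
  have hQm1 : Qlm ℓ (m-1) θ ≤ 0 := le_trans (mono (m-1) m (by linarith) (by linarith)) hQm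
  rw [abs_of_nonpos hQ, abs_of_nonpos hQm1, abs_of_nonpos hQm]
  apply sqrt_add_sqrt_le _ _ _ (by linarith) (by linarith)
  have key : Qlm ℓ (m+1) θ + Qlm ℓ (m-1) θ - 2 * Qlm ℓ m θ = 2 / Real.cos θ ^ 2 := by
    unfold Qlm
    push_cast
    field_simp
    ring
  have : 0 < 2 / Real.cos θ ^ 2 := by positivity
  linarith
end

section
/- Let ℓ ≥ 1 and m ≥ 1 be integers and let θ ≥ 0 be such that Q_{ℓ,m+1}(t) ≤ 0 for all t ∈ [0, θ]. Then S_{ℓ,m+1}(θ) − S_{ℓ,m}(θ) ≤ S_{ℓ,m}(θ) − S_{ℓ,m−1}(θ). -/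
open Real

noncomputable def Slm (ℓ : ℕ) (m : ℤ) (θ : ℝ) : ℝ :=
  ∫ t in (0:ℝ)..θ, Real.sqrt |Qlm ℓ m t|

lemma key_ineq (ℓ : ℕ) (m : ℤ) (hm : 1 ≤ m) (t : ℝ) (hc : 0 < Real.cos t)
    (hQ : Qlm ℓ (m + 1) t ≤ 0) :
    Real.sqrt |Qlm ℓ (m + 1) t| + Real.sqrt |Qlm ℓ (m - 1) t| ≤
      2 * Real.sqrt |Qlm ℓ m t| := by
  have hc2 : (0:ℝ) < Real.cos t ^ 2 := by positivity
  have hmr : (1:ℝ) ≤ (m : ℝ) := by exact_mod_cast hm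
  have h1 : Qlm ℓ m t ≤ Qlm ℓ (m + 1) t := by
    unfold Qlm
    push_cast
    gcongr
    nlinarith
  have h2 : Qlm ℓ (m - 1) t ≤ Qlm ℓ (m + 1) t := by
    unfold Qlm
    push_cast
    gcongr <;> nlinarith
  have hsum : Qlm ℓ (m + 1) t + Qlm ℓ (m - 1) t - 2 * Qlm ℓ m t = 2 / Real.cos t ^ 2 := by
    unfold Qlm
    push_cast
    field_simp
    ring
  have hQm : Qlm ℓ m t ≤ 0 := le_trans h1 hQ
  have hQm1 : Qlm ℓ (m - 1) t ≤ 0 := le_trans h2 hQ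
  rw [abs_of_nonpos hQ, abs_of_nonpos hQm, abs_of_nonpos hQm1]
  set a := Real.sqrt (-Qlm ℓ (m + 1) t) with ha
  set b := Real.sqrt (-Qlm ℓ (m - 1) t) with hb
  set s := Real.sqrt (-Qlm ℓ m t) with hs
  have ha2 : a ^ 2 = -Qlm ℓ (m + 1) t := Real.sq_sqrt (by linarith)
  have hb2 : b ^ 2 = -Qlm ℓ (m - 1) t := Real.sq_sqrt (by linarith)
  have hs2 : s ^ 2 = -Qlm ℓ m t := Real.sq_sqrt (by linarith)
  have ha0 : 0 ≤ a := Real.sqrt_nonneg _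
  have hb0 : 0 ≤ b := Real.sqrt_nonneg _
  have hs0 : 0 ≤ s := Real.sqrt_nonneg _
  have habs : a ^ 2 + b ^ 2 ≤ 2 * s ^ 2 := by
    have : (0:ℝ) < 2 / Real.cos t ^ 2 := by positivity
    nlinarith
  nlinarith [sq_nonneg (a - b), sq_nonneg (a + b - 2 * s), sq_nonneg (a + b),
    mul_nonneg ha0 hb0, mul_nonneg (mul_nonneg ha0 hb0) hs0]

/-- Monotonicity of the phase increments. -/
theorem stmt_7 (ℓ : ℕ) (hℓ : 1 ≤ ℓ) (m : ℤ) (hm : 1 ≤ m) (θ : ℝ)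
    (hθ0 : 0 ≤ θ) (hθ : θ < π / 2)
    (hQ : ∀ t ∈ Set.Icc (0:ℝ) θ, Qlm ℓ (m + 1) t ≤ 0) :
    Slm ℓ (m + 1) θ - Slm ℓ m θ ≤ Slm ℓ m θ - Slm ℓ (m - 1) θ := by
  have hcos : ∀ t ∈ Set.Icc (0:ℝ) θ, 0 < Real.cos t := by
    intro t ht
    apply Real.cos_pos_of_mem_Ioo
    constructor
    · have : (0:ℝ) < π / 2 := by positivity
      linarith [ht.1]
    · linarith [ht.2]
  have contQ : ∀ k : ℤ, ContinuousOn (fun t => Real.sqrt |Qlm ℓ k t|) (Set.Icc (0:ℝ) θ) := by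
    intro k
    apply (Real.continuous_sqrt.comp continuous_abs).comp_continuousOn
    unfold Qlm
    apply ContinuousOn.sub
    apply ContinuousOn.sub
    · exact continuousOn_const.div ((Real.continuous_cos.pow 2).continuousOn)
        (fun t ht => pow_ne_zero 2 (hcos t ht).ne')
    · exact continuousOn_const
    · exact continuousOn_const
  have hicc : Set.uIcc (0:ℝ) θ = Set.Icc (0:ℝ) θ := Set.uIcc_of_le hθ0
  have int : ∀ k : ℤ, IntervalIntegrable (fun t => Real.sqrt |Qlm ℓ k t|)
      MeasureTheory.volume 0 θ := by
    intro k
    apply ContinuousOn.intervalIntegrable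
    rw [hicc]; exact contQ k
  have key : ∀ t ∈ Set.Icc (0:ℝ) θ,
      Real.sqrt |Qlm ℓ (m + 1) t| + Real.sqrt |Qlm ℓ (m - 1) t| ≤
        2 * Real.sqrt |Qlm ℓ m t| := fun t ht =>
    key_ineq ℓ m hm t (hcos t ht) (hQ t ht)
  have hint : (∫ t in (0:ℝ)..θ,
        (Real.sqrt |Qlm ℓ (m + 1) t| + Real.sqrt |Qlm ℓ (m - 1) t|)) ≤
      ∫ t in (0:ℝ)..θ, 2 * Real.sqrt |Qlm ℓ m t| := by
    apply intervalIntegral.integral_mono_on hθ0 ((int (m+1)).add (int (m-1)))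
      ((int m).const_mul 2) key
  rw [intervalIntegral.integral_add (int (m+1)) (int (m-1)),
    intervalIntegral.integral_const_mul] at hint
  unfold Slm
  linarith
end
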